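/- arXiv:0802.0585 — 3 statements merged into one kernel-verified Lean document; each statement's English description precedes it below -/
import Mathlib

section
/- There exists a constant C₂ > 0 such that for all u ∈ H and v ∈ V, the sequence B(u, v) belongs to H and |B(u, v)| ≤ C₂ |u| ‖v‖. -/
open Complex MeasureTheory Filter Topology

noncomputable section

/-- The wave numbers `kₙ = k₀ · 2ⁿ`. -/
def kk (k₀ : ℝ) (n : ℕ) : ℝ := k₀ * 2 ^ n

/-- The GOY nonlinearity `B(u,v)ₙ`; sequences are indexed from `1`, with the
convention that the `0`-th entry (playing the role of `u₀ = u₋₁ = 0`) vanishes. -/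
def goyB (k₀ : ℝ) (u v : ℕ → ℂ) (n : ℕ) : ℂ :=
  if n = 0 then 0 else
    Complex.I * (kk k₀ n : ℂ) *
      ((1 / 4) * (starRingEnd ℂ) (u (n + 1)) * (starRingEnd ℂ) (v (n - 1))
        - (1 / 2) * ((starRingEnd ℂ) (u (n + 1)) * (starRingEnd ℂ) (v (n + 2))
            + (starRingEnd ℂ) (u (n + 2)) * (starRingEnd ℂ) (v (n + 1)))
        + (1 / 8) * (starRingEnd ℂ) (u (n - 1)) * (starRingEnd ℂ) (v (n - 2)))

/-- Membership in `H`: square summability. -/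
def memH (u : ℕ → ℂ) : Prop := Summable fun n => ‖u n‖ ^ 2

/-- Membership in `V`. -/
def memV (k₀ : ℝ) (u : ℕ → ℂ) : Prop := Summable fun n => kk k₀ n ^ 2 * ‖u n‖ ^ 2

/-- `|u|² = ∑ₙ |uₙ|²`. -/
def hnormSq (u : ℕ → ℂ) : ℝ := ∑' n, ‖u n‖ ^ 2

/-- `‖u‖² = ∑ₙ kₙ²|uₙ|²`. -/
def vnormSq (k₀ : ℝ) (u : ℕ → ℂ) : ℝ := ∑' n, kk k₀ n ^ 2 * ‖u n‖ ^ 2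

/-- `‖u‖_{V'}² = ∑ₙ kₙ⁻²|uₙ|²`. -/
def vdualSq (k₀ : ℝ) (u : ℕ → ℂ) : ℝ := ∑' n, ‖u n‖ ^ 2 / kk k₀ n ^ 2

end

/-!
Each component `Bₙ(u, v)` pairs an entry of `u` with an entry of `v` whose index `m` is within
distance two of `n`, and `|kₙ| ≤ 4 |kₘ|` for those indices. Hence `|Bₙ| ≤ ½ ∑ |uₐ| |kₘ| |vₘ|` over
four pairs `(a, m)`; bounding each `|uₐ|²` by `|u|²` and summing the squares over `n`, every shifted
copy of `∑ₘ kₘ² |vₘ|²` is at most `3 ‖v‖²` (the truncated index `n - 2` visits `0` three times), so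
`|B(u, v)|² ≤ 7 |u|² ‖v‖²`.
-/

lemma Summable.comp_nat_sub {G : Type*} [AddCommGroup G] [TopologicalSpace G]
    [IsTopologicalAddGroup G] {f : ℕ → G} (hf : Summable f) (k : ℕ) :
    Summable fun n => f (n - k) :=
  (summable_nat_add_iff k).mp (by simpa only [Nat.add_sub_cancel] using hf)

lemma tsum_comp_nat_sub_le {f : ℕ → ℝ} (hf : Summable f) (hf₀ : ∀ n, 0 ≤ f n) (k : ℕ) :
    ∑' n, f (n - k) ≤ (k + 1) * ∑' n, f n := by
  have hsplit := (hf.comp_nat_sub k).sum_add_tsum_nat_add k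
  have hhead : ∑ i ∈ Finset.range k, f (i - k) = k * f 0 := by
    rw [Finset.sum_congr rfl fun i hi => by
      rw [Nat.sub_eq_zero_of_le (Finset.mem_range.1 hi).le]]
    simp
  simp only [Nat.add_sub_cancel, hhead] at hsplit
  have hhead_le := hf.le_tsum 0 fun j _ => hf₀ j
  nlinarith [(Nat.cast_nonneg k : (0 : ℝ) ≤ k)]

lemma tsum_comp_nat_add_le {f : ℕ → ℝ} (hf : Summable f) (hf₀ : ∀ n, 0 ≤ f n) (k : ℕ) :
    ∑' n, f (n + k) ≤ ∑' n, f n :=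
  tsum_comp_le_tsum_of_inj hf hf₀ (add_left_injective k)

lemma abs_kk_add (k₀ : ℝ) (n m : ℕ) : |kk k₀ (n + m)| = 2 ^ m * |kk k₀ n| := by
  simp only [kk, pow_add, abs_mul, abs_pow, abs_two]
  ring

lemma abs_kk_le_mul_abs_kk_sub (k₀ : ℝ) (n m : ℕ) : |kk k₀ n| ≤ 2 ^ m * |kk k₀ (n - m)| := by
  have hpow : (2 : ℝ) ^ n ≤ 2 ^ m * 2 ^ (n - m) := by
    rw [← pow_add]
    exact pow_le_pow_right₀ one_le_two (by omega)
  simp only [kk, abs_mul, abs_pow, abs_two]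
  nlinarith [abs_nonneg k₀]

lemma norm_goy_bracket_le (a b c d e f g : ℂ) :
    ‖1 / 4 * (starRingEnd ℂ) a * (starRingEnd ℂ) b
        - 1 / 2 * ((starRingEnd ℂ) a * (starRingEnd ℂ) c + (starRingEnd ℂ) d * (starRingEnd ℂ) e)
        + 1 / 8 * (starRingEnd ℂ) f * (starRingEnd ℂ) g‖
      ≤ ‖a‖ * ‖b‖ / 4 + ‖a‖ * ‖c‖ / 2 + ‖d‖ * ‖e‖ / 2 + ‖f‖ * ‖g‖ / 8 := by
  have hsum := norm_add_le ((starRingEnd ℂ) a * (starRingEnd ℂ) c)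
    ((starRingEnd ℂ) d * (starRingEnd ℂ) e)
  refine (norm_add_le _ _).trans ((add_le_add_left (norm_sub_le _ _) _).trans ?_)
  simp only [norm_mul, RCLike.norm_conj] at hsum ⊢
  norm_num
  linarith

lemma norm_goyB_le (k₀ : ℝ) (u v : ℕ → ℂ) (n : ℕ) :
    ‖goyB k₀ u v n‖ ≤
      (‖u (n + 1)‖ * (|kk k₀ (n - 1)| * ‖v (n - 1)‖) + ‖u (n + 1)‖ * (|kk k₀ (n + 2)| * ‖v (n + 2)‖)
        + ‖u (n + 2)‖ * (|kk k₀ (n + 1)| * ‖v (n + 1)‖)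
        + ‖u (n - 1)‖ * (|kk k₀ (n - 2)| * ‖v (n - 2)‖)) / 2 := by
  rcases eq_or_ne n 0 with rfl | hn
  · simp only [goyB, if_true, norm_zero]
    positivity
  have h1 := abs_kk_le_mul_abs_kk_sub k₀ n 1
  have h2 := abs_kk_le_mul_abs_kk_sub k₀ n 2
  calc ‖goyB k₀ u v n‖
      = |kk k₀ n| * ‖1 / 4 * (starRingEnd ℂ) (u (n + 1)) * (starRingEnd ℂ) (v (n - 1))
          - 1 / 2 * ((starRingEnd ℂ) (u (n + 1)) * (starRingEnd ℂ) (v (n + 2))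
            + (starRingEnd ℂ) (u (n + 2)) * (starRingEnd ℂ) (v (n + 1)))
          + 1 / 8 * (starRingEnd ℂ) (u (n - 1)) * (starRingEnd ℂ) (v (n - 2))‖ := by
        rw [goyB, if_neg hn, norm_mul, norm_mul, Complex.norm_I, one_mul, Complex.norm_real,
          Real.norm_eq_abs]
    _ ≤ |kk k₀ n| * (‖u (n + 1)‖ * ‖v (n - 1)‖ / 4 + ‖u (n + 1)‖ * ‖v (n + 2)‖ / 2
          + ‖u (n + 2)‖ * ‖v (n + 1)‖ / 2 + ‖u (n - 1)‖ * ‖v (n - 2)‖ / 8) :=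
        mul_le_mul_of_nonneg_left (norm_goy_bracket_le ..) (abs_nonneg _)
    _ ≤ _ := by
        rw [abs_kk_add, abs_kk_add]
        have hk := abs_nonneg (kk k₀ n)
        nlinarith [mul_le_mul_of_nonneg_right h1
            (mul_nonneg (norm_nonneg (u (n + 1))) (norm_nonneg (v (n - 1)))),
          mul_le_mul_of_nonneg_right h2
            (mul_nonneg (norm_nonneg (u (n - 1))) (norm_nonneg (v (n - 2)))),
          mul_nonneg hk (mul_nonneg (norm_nonneg (u (n + 1))) (norm_nonneg (v (n + 2)))),
          mul_nonneg hk (mul_nonneg (norm_nonneg (u (n + 2))) (norm_nonneg (v (n + 1))))]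

lemma sq_norm_goyB_le (k₀ : ℝ) {u : ℕ → ℂ} (v : ℕ → ℂ) (hu : memH u) (n : ℕ) :
    ‖goyB k₀ u v n‖ ^ 2 ≤ hnormSq u *
      (kk k₀ (n - 1) ^ 2 * ‖v (n - 1)‖ ^ 2 + kk k₀ (n + 2) ^ 2 * ‖v (n + 2)‖ ^ 2
        + kk k₀ (n + 1) ^ 2 * ‖v (n + 1)‖ ^ 2 + kk k₀ (n - 2) ^ 2 * ‖v (n - 2)‖ ^ 2) := by
  have hterm : ∀ a m, (‖u a‖ * (|kk k₀ m| * ‖v m‖)) ^ 2 ≤ hnormSq u * (kk k₀ m ^ 2 * ‖v m‖ ^ 2) :=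
    fun a m => by
      rw [mul_pow, mul_pow, sq_abs]
      exact mul_le_mul_of_nonneg_right (hu.le_tsum a fun _ _ => sq_nonneg _) (by positivity)
  have h := norm_goyB_le k₀ u v n
  have h1 := hterm (n + 1) (n - 1)
  have h2 := hterm (n + 1) (n + 2)
  have h3 := hterm (n + 2) (n + 1)
  have h4 := hterm (n - 1) (n - 2)
  set t₁ := ‖u (n + 1)‖ * (|kk k₀ (n - 1)| * ‖v (n - 1)‖)
  set t₂ := ‖u (n + 1)‖ * (|kk k₀ (n + 2)| * ‖v (n + 2)‖)
  set t₃ := ‖u (n + 2)‖ * (|kk k₀ (n + 1)| * ‖v (n + 1)‖)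
  set t₄ := ‖u (n - 1)‖ * (|kk k₀ (n - 2)| * ‖v (n - 2)‖)
  calc ‖goyB k₀ u v n‖ ^ 2 ≤ ((t₁ + t₂ + t₃ + t₄) / 2) ^ 2 :=
        pow_le_pow_left₀ (norm_nonneg _) h 2
    _ ≤ t₁ ^ 2 + t₂ ^ 2 + t₃ ^ 2 + t₄ ^ 2 := by
        nlinarith [sq_nonneg (t₁ - t₂), sq_nonneg (t₁ - t₃), sq_nonneg (t₁ - t₄),
          sq_nonneg (t₂ - t₃), sq_nonneg (t₂ - t₄), sq_nonneg (t₃ - t₄)]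
    _ ≤ _ := by linarith

lemma hnormSq_nonneg (u : ℕ → ℂ) : 0 ≤ hnormSq u :=
  tsum_nonneg fun _ => sq_nonneg _

theorem memH_goyB_and_hnormSq_le (k₀ : ℝ) {u v : ℕ → ℂ} (hu : memH u) (hv : memV k₀ v) :
    memH (goyB k₀ u v) ∧ hnormSq (goyB k₀ u v) ≤ 7 * hnormSq u * vnormSq k₀ v := by
  set W : ℕ → ℝ := fun m => kk k₀ m ^ 2 * ‖v m‖ ^ 2
  have hW : Summable W := hv
  have hW₀ : ∀ m, 0 ≤ W m := fun m => by positivity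
  have hs₁ := hW.comp_nat_sub 1
  have hs₂ := (summable_nat_add_iff 2).mpr hW
  have hs₃ := (summable_nat_add_iff 1).mpr hW
  have hs₄ := hW.comp_nat_sub 2
  have hmaj : Summable fun n => hnormSq u * (W (n - 1) + W (n + 2) + W (n + 1) + W (n - 2)) :=
    (((hs₁.add hs₂).add hs₃).add hs₄).mul_left _
  have hB : memH (goyB k₀ u v) :=
    .of_nonneg_of_le (fun n => sq_nonneg _) (sq_norm_goyB_le k₀ v hu) hmaj
  refine ⟨hB, ?_⟩
  have hu₀ := hnormSq_nonneg u
  calc hnormSq (goyB k₀ u v)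
      ≤ ∑' n, hnormSq u * (W (n - 1) + W (n + 2) + W (n + 1) + W (n - 2)) :=
        hB.tsum_le_tsum (sq_norm_goyB_le k₀ v hu) hmaj
    _ = hnormSq u * (∑' n, W (n - 1) + ∑' n, W (n + 2) + ∑' n, W (n + 1) + ∑' n, W (n - 2)) := by
        rw [tsum_mul_left, (hs₁.add hs₂).add hs₃ |>.tsum_add hs₄, (hs₁.add hs₂).tsum_add hs₃,
          hs₁.tsum_add hs₂]
    _ ≤ hnormSq u * ((1 + 1) * ∑' n, W n + ∑' n, W n + ∑' n, W n + (2 + 1) * ∑' n, W n) := by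
        gcongr ?_ * (?_ + ?_ + ?_ + ?_)
        · exact_mod_cast tsum_comp_nat_sub_le hW hW₀ 1
        · exact tsum_comp_nat_add_le hW hW₀ 2
        · exact tsum_comp_nat_add_le hW hW₀ 1
        · exact_mod_cast tsum_comp_nat_sub_le hW hW₀ 2
    _ = 7 * hnormSq u * vnormSq k₀ v := by
        simp only [vnormSq, W]
        ring

theorem stmt_3_general (k₀ : ℝ) :
    ∃ C₂ : ℝ, 0 < C₂ ∧ ∀ u v : ℕ → ℂ, u 0 = 0 → v 0 = 0 → memH u → memV k₀ v →
      memH (goyB k₀ u v) ∧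
      Real.sqrt (hnormSq (goyB k₀ u v)) ≤
        C₂ * Real.sqrt (hnormSq u) * Real.sqrt (vnormSq k₀ v) := by
  refine ⟨√7, by positivity, fun u v _ _ hu hv => ?_⟩
  obtain ⟨hB, hle⟩ := memH_goyB_and_hnormSq_le k₀ hu hv
  refine ⟨hB, ?_⟩
  have hu₀ := hnormSq_nonneg u
  rw [← Real.sqrt_mul (by positivity), ← Real.sqrt_mul (by positivity)]
  exact Real.sqrt_le_sqrt hle

/-- `|B(u,v)| ≤ C₂ |u| ‖v‖` for `u ∈ H`, `v ∈ V`. -/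
theorem stmt_3 (k₀ : ℝ) (hk₀ : 0 < k₀) :
    ∃ C₂ : ℝ, 0 < C₂ ∧ ∀ u v : ℕ → ℂ, u 0 = 0 → v 0 = 0 → memH u → memV k₀ v →
      memH (goyB k₀ u v) ∧
      Real.sqrt (hnormSq (goyB k₀ u v)) ≤
        C₂ * Real.sqrt (hnormSq u) * Real.sqrt (vnormSq k₀ v) :=
  stmt_3_general k₀
end

section
/- There exists a constant C₄ > 0 such that for all u ∈ H and all v with |Av| = (∑ₙ kₙ⁴|vₙ|²)^{1/2} < ∞, one has ‖B(u, v)‖ = (∑ₙ kₙ²|Bₙ(u, v)|²)^{1/2} ≤ C₄ |u| |Av|. -/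
open Complex MeasureTheory Filter Topology

lemma kk_nonneg (k₀ : ℝ) (hk₀ : 0 < k₀) (n : ℕ) : 0 ≤ kk k₀ n := by
  unfold kk; positivity

lemma kk_succ (k₀ : ℝ) (n : ℕ) : kk k₀ (n+1) = 2 * kk k₀ n := by
  unfold kk; rw [pow_succ]; ring

lemma term_bound {K c kI M : ℝ} (U V : ℝ) (hK : K ≤ c * kI) (hc : 0 ≤ c)
    (hkI : 0 ≤ kI) (hU : U ^ 2 ≤ M) :
    K * (U * V) ^ 2 ≤ c * M * (kI * V ^ 2) := by
  calc K * (U * V) ^ 2 ≤ c * kI * (U * V) ^ 2 :=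
        mul_le_mul_of_nonneg_right hK (sq_nonneg _)
    _ = c * (U ^ 2 * (kI * V ^ 2)) := by ring
    _ ≤ c * (M * (kI * V ^ 2)) :=
        mul_le_mul_of_nonneg_left
          (mul_le_mul_of_nonneg_right hU (mul_nonneg hkI (sq_nonneg _))) hc
    _ = c * M * (kI * V ^ 2) := by ring

set_option maxHeartbeats 1600000 in
/-- `‖B(u,v)‖_V ≤ C₄ |u| |Av|` for `u ∈ H`, `v ∈ D(A)`. -/
theorem stmt_5 (k₀ : ℝ) (hk₀ : 0 < k₀) :
    ∃ C₄ : ℝ, 0 < C₄ ∧ ∀ u v : ℕ → ℂ, u 0 = 0 → v 0 = 0 → memH u →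
      Summable (fun n => kk k₀ n ^ 4 * ‖v n‖ ^ 2) →
      Summable (fun n => kk k₀ n ^ 2 * ‖goyB k₀ u v n‖ ^ 2) ∧
      Real.sqrt (∑' n, kk k₀ n ^ 2 * ‖goyB k₀ u v n‖ ^ 2) ≤
        C₄ * Real.sqrt (hnormSq u) * Real.sqrt (∑' n, kk k₀ n ^ 4 * ‖v n‖ ^ 2) := by
  refine ⟨85, by norm_num, fun u v hu0 hv0 hu hv => ?_⟩
  have hknn := kk_nonneg k₀ hk₀
  set M := hnormSq u with hMdef
  set g : ℕ → ℝ := fun n => kk k₀ n ^ 4 * ‖v n‖ ^ 2 with hgdef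
  have hMnn : 0 ≤ M := tsum_nonneg (fun n => sq_nonneg _)
  have hgnn : ∀ n, 0 ≤ g n := fun n => mul_nonneg (by positivity) (sq_nonneg _)
  have hum : ∀ m, ‖u m‖ ^ 2 ≤ M := fun m => Summable.le_tsum hu m (fun _ _ => sq_nonneg _)
  clear_value M
  set G := ∑' n, g n with hGdef
  clear_value G
  have hGnn : 0 ≤ G := hGdef ▸ tsum_nonneg hgnn
  -- pointwise bound
  have key : ∀ n, kk k₀ n ^ 2 * ‖goyB k₀ u v n‖ ^ 2 ≤
      1024 * M * (g (n-1) + g (n+1) + g (n+2) + g (n-2)) := by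
    intro n
    match n with
    | 0 =>
      have : goyB k₀ u v 0 = 0 := by simp [goyB]
      rw [this]
      simp only [norm_zero]
      have : (0:ℝ) ≤ 1024 * M * (g 0 + g 1 + g 2 + g 0) := by positivity
      simpa using this
    | (m+1) =>
      set t₁ := ‖u (m+2)‖ * ‖v m‖ with ht1
      set t₂ := ‖u (m+2)‖ * ‖v (m+3)‖ with ht2
      set t₃ := ‖u (m+3)‖ * ‖v (m+2)‖ with ht3
      set t₄ := ‖u m‖ * ‖v (m-1)‖ with ht4
      clear_value t₁ t₂ t₃ t₄
      have htnn : 0 ≤ t₁ ∧ 0 ≤ t₂ ∧ 0 ≤ t₃ ∧ 0 ≤ t₄ :=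
        ⟨ht1 ▸ mul_nonneg (norm_nonneg _) (norm_nonneg _),
         ht2 ▸ mul_nonneg (norm_nonneg _) (norm_nonneg _),
         ht3 ▸ mul_nonneg (norm_nonneg _) (norm_nonneg _),
         ht4 ▸ mul_nonneg (norm_nonneg _) (norm_nonneg _)⟩
      have hBle : ‖goyB k₀ u v (m+1)‖ ≤ kk k₀ (m+1) * (t₁ + t₂ + t₃ + t₄) := by
        have h0 : goyB k₀ u v (m+1) = Complex.I * (kk k₀ (m+1) : ℂ) *
            ((1 / 4) * (starRingEnd ℂ) (u (m + 2)) * (starRingEnd ℂ) (v m)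
              - (1 / 2) * ((starRingEnd ℂ) (u (m + 2)) * (starRingEnd ℂ) (v (m + 3))
                  + (starRingEnd ℂ) (u (m + 3)) * (starRingEnd ℂ) (v (m + 2)))
              + (1 / 8) * (starRingEnd ℂ) (u m) * (starRingEnd ℂ) (v (m - 1))) := by
          simp [goyB]
        rw [h0]
        rw [norm_mul, norm_mul, Complex.norm_I, one_mul, Complex.norm_real,
          Real.norm_eq_abs, _root_.abs_of_nonneg (hknn _)]
        have hin : ‖((1 / 4) * (starRingEnd ℂ) (u (m + 2)) * (starRingEnd ℂ) (v m)
              - (1 / 2) * ((starRingEnd ℂ) (u (m + 2)) * (starRingEnd ℂ) (v (m + 3))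
                  + (starRingEnd ℂ) (u (m + 3)) * (starRingEnd ℂ) (v (m + 2)))
              + (1 / 8) * (starRingEnd ℂ) (u m) * (starRingEnd ℂ) (v (m - 1)))‖
            ≤ t₁ + t₂ + t₃ + t₄ := by
          calc _ ≤ ‖(1 / 4 : ℂ) * (starRingEnd ℂ) (u (m + 2)) * (starRingEnd ℂ) (v m)
              - (1 / 2 : ℂ) * ((starRingEnd ℂ) (u (m + 2)) * (starRingEnd ℂ) (v (m + 3))
                  + (starRingEnd ℂ) (u (m + 3)) * (starRingEnd ℂ) (v (m + 2)))‖
              + ‖(1 / 8 : ℂ) * (starRingEnd ℂ) (u m) * (starRingEnd ℂ) (v (m - 1))‖ :=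
            norm_add_le _ _
          _ ≤ ‖(1 / 4 : ℂ) * (starRingEnd ℂ) (u (m + 2)) * (starRingEnd ℂ) (v m)‖
              + ‖(1 / 2 : ℂ) * ((starRingEnd ℂ) (u (m + 2)) * (starRingEnd ℂ) (v (m + 3))
                  + (starRingEnd ℂ) (u (m + 3)) * (starRingEnd ℂ) (v (m + 2)))‖
              + ‖(1 / 8 : ℂ) * (starRingEnd ℂ) (u m) * (starRingEnd ℂ) (v (m - 1))‖ := by
            gcongr
            exact norm_sub_le _ _
          _ ≤ t₁ + t₂ + t₃ + t₄ := by
            simp only [norm_mul, RCLike.norm_conj]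
            have h4 : ‖(1/4 : ℂ)‖ = 1/4 := by norm_num
            have h2 : ‖(1/2 : ℂ)‖ = 1/2 := by norm_num
            have h8 : ‖(1/8 : ℂ)‖ = 1/8 := by norm_num
            rw [h4, h2, h8]
            have hadd : ‖(starRingEnd ℂ) (u (m + 2)) * (starRingEnd ℂ) (v (m + 3))
                + (starRingEnd ℂ) (u (m + 3)) * (starRingEnd ℂ) (v (m + 2))‖ ≤ t₂ + t₃ := by
              refine (norm_add_le _ _).trans ?_
              simp only [norm_mul, RCLike.norm_conj, ht2, ht3]
              exact le_rfl
            rw [ht1, ht2, ht3, ht4]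
            nlinarith [htnn.1, htnn.2.1, htnn.2.2.1, htnn.2.2.2, hadd,
              norm_nonneg ((starRingEnd ℂ) (u (m + 2)) * (starRingEnd ℂ) (v (m + 3))
                + (starRingEnd ℂ) (u (m + 3)) * (starRingEnd ℂ) (v (m + 2)))]
        exact mul_le_mul_of_nonneg_left hin (hknn _)
      -- square it
      have hSnn : 0 ≤ t₁ + t₂ + t₃ + t₄ := by linarith [htnn.1, htnn.2.1, htnn.2.2.1, htnn.2.2.2]
      have hB2 : ‖goyB k₀ u v (m+1)‖ ^ 2 ≤ kk k₀ (m+1) ^ 2 * (t₁ + t₂ + t₃ + t₄) ^ 2 := by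
        rw [← mul_pow]
        exact pow_le_pow_left₀ (norm_nonneg _) hBle 2
      have hk4nn : (0:ℝ) ≤ kk k₀ (m+1) ^ 4 := by positivity
      have hfin : kk k₀ (m+1) ^ 2 * ‖goyB k₀ u v (m+1)‖ ^ 2
          ≤ kk k₀ (m+1) ^ 4 * (t₁ + t₂ + t₃ + t₄) ^ 2 := by
        calc kk k₀ (m+1) ^ 2 * ‖goyB k₀ u v (m+1)‖ ^ 2
            ≤ kk k₀ (m+1) ^ 2 * (kk k₀ (m+1) ^ 2 * (t₁ + t₂ + t₃ + t₄) ^ 2) :=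
              mul_le_mul_of_nonneg_left hB2 (sq_nonneg _)
          _ = kk k₀ (m+1) ^ 4 * (t₁ + t₂ + t₃ + t₄) ^ 2 := by ring
      have hS2 : (t₁ + t₂ + t₃ + t₄) ^ 2 ≤ 4 * (t₁^2 + t₂^2 + t₃^2 + t₄^2) := by
        nlinarith [sq_nonneg (t₁ - t₂), sq_nonneg (t₁ - t₃), sq_nonneg (t₁ - t₄),
          sq_nonneg (t₂ - t₃), sq_nonneg (t₂ - t₄), sq_nonneg (t₃ - t₄)]
      have hS2' := mul_le_mul_of_nonneg_left hS2 hk4nn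
      have h1 : kk k₀ (m+1) ^ 4 * t₁ ^ 2 ≤ 16 * M * g m := by
        rw [ht1]
        have e1 : kk k₀ (m+1) ^ 4 ≤ 16 * kk k₀ m ^ 4 := by rw [kk_succ]; nlinarith [pow_nonneg (hknn m) 4]
        exact term_bound _ _ e1 (by norm_num) (by positivity) (hum (m+2))
      have h2 : kk k₀ (m+1) ^ 4 * t₂ ^ 2 ≤ 1 * M * g (m+3) := by
        rw [ht2]
        have e4 : kk k₀ (m+3) ^ 4 = 256 * kk k₀ (m+1) ^ 4 := by
          rw [kk_succ, kk_succ]; ring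
        have hK : kk k₀ (m+1) ^ 4 ≤ 1 * kk k₀ (m+3) ^ 4 := by rw [e4]; linarith [hk4nn]
        exact term_bound _ _ hK (by norm_num) (by positivity) (hum (m+2))
      have h3 : kk k₀ (m+1) ^ 4 * t₃ ^ 2 ≤ 1 * M * g (m+2) := by
        rw [ht3]
        have e4 : kk k₀ (m+2) ^ 4 = 16 * kk k₀ (m+1) ^ 4 := by rw [kk_succ]; ring
        have hK : kk k₀ (m+1) ^ 4 ≤ 1 * kk k₀ (m+2) ^ 4 := by rw [e4]; linarith [hk4nn]
        exact term_bound _ _ hK (by norm_num) (by positivity) (hum (m+3))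
      have h4 : kk k₀ (m+1) ^ 4 * t₄ ^ 2 ≤ 256 * M * g (m-1) := by
        match m, ht4 with
        | 0, ht4 =>
          rw [ht4, hu0]
          simp only [norm_zero, zero_mul]
          have : (0:ℝ) ≤ 256 * M * g 0 := by positivity
          simpa using this
        | (l+1), ht4 =>
          rw [ht4]
          have e4 : kk k₀ (l+2) ^ 4 ≤ 256 * kk k₀ l ^ 4 := by
            rw [kk_succ, kk_succ]; nlinarith [pow_nonneg (hknn l) 4]
          exact term_bound _ _ e4 (by norm_num) (by positivity) (hum (l+1))
      have hidx1 : (m+1) - 1 = m := rfl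
      have hidx2 : (m+1) + 1 = m+2 := rfl
      have hidx3 : (m+1) + 2 = m+3 := rfl
      have hidx4 : (m+1) - 2 = m - 1 := rfl
      rw [hidx1, hidx2, hidx3, hidx4]
      have nn1 : 0 ≤ M * g m := mul_nonneg hMnn (hgnn m)
      have nn2 : 0 ≤ M * g (m+2) := mul_nonneg hMnn (hgnn (m+2))
      have nn3 : 0 ≤ M * g (m+3) := mul_nonneg hMnn (hgnn (m+3))
      have nn4 : 0 ≤ M * g (m-1) := mul_nonneg hMnn (hgnn (m-1))
      nlinarith [hfin, hS2', h1, h2, h3, h4, nn1, nn2, nn3, nn4]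
  -- summability of components
  have hg1 : Summable (fun n => g (n+1)) := (summable_nat_add_iff 1).2 hv
  have hg2 : Summable (fun n => g (n+2)) := (summable_nat_add_iff 2).2 hv
  have hgm1 : Summable (fun n : ℕ => g (n-1)) := by
    have : Summable (fun n : ℕ => g ((n+1)-1)) := hv
    exact (summable_nat_add_iff 1).1 this
  have hgm2 : Summable (fun n : ℕ => g (n-2)) := by
    have : Summable (fun n : ℕ => g ((n+2)-2)) := hv
    exact (summable_nat_add_iff 2).1 this
  set h : ℕ → ℝ := fun n => 1024 * M * (g (n-1) + g (n+1) + g (n+2) + g (n-2)) with hhdef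
  have hhs : Summable h := by
    apply Summable.mul_left
    exact ((hgm1.add hg1).add hg2).add hgm2
  have hLnn : ∀ n, 0 ≤ kk k₀ n ^ 2 * ‖goyB k₀ u v n‖ ^ 2 := fun n => by positivity
  have hLs : Summable (fun n => kk k₀ n ^ 2 * ‖goyB k₀ u v n‖ ^ 2) :=
    Summable.of_nonneg_of_le hLnn key hhs
  refine ⟨hLs, ?_⟩
  -- tsum bounds
  have hT1 : ∑' n : ℕ, g (n+1) ≤ G := by
    have := Summable.tsum_eq_zero_add hv
    have hg0 : 0 ≤ g 0 := hgnn 0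
    rw [hGdef]
    linarith [this]
  have hg0G : g 0 ≤ G := hGdef ▸ Summable.le_tsum hv 0 (fun j _ => hgnn j)
  have hTm1 : ∑' n : ℕ, g (n-1) ≤ 2 * G := by
    have e := Summable.tsum_eq_zero_add hgm1
    simp only [show (0:ℕ) - 1 = 0 from rfl, show ∀ n : ℕ, n + 1 - 1 = n from fun _ => rfl] at e
    rw [e, ← hGdef]
    linarith
  have hT2 : ∑' n : ℕ, g (n+2) ≤ G := by
    have e1 := Summable.tsum_eq_zero_add hv
    have e2 := Summable.tsum_eq_zero_add hg1
    simp only [show ∀ n : ℕ, n + 1 + 1 = n + 2 from fun _ => rfl,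
      show (0:ℕ) + 1 = 1 from rfl] at e2
    rw [hGdef]
    linarith [hgnn 0, hgnn 1, e1, e2]
  have hTm2 : ∑' n : ℕ, g (n-2) ≤ 3 * G := by
    have e1 := Summable.tsum_eq_zero_add hgm2
    have hgm2' : Summable (fun n : ℕ => g ((n+1)-2)) := by
      have h' : Summable (fun n : ℕ => g ((n+1+1)-2)) :=
        (summable_nat_add_iff (f := fun n : ℕ => g ((n+1)-2)) 1).2
          ((summable_nat_add_iff (f := fun n : ℕ => g ((n+1)-2)) 1).1 hv)
      exact (summable_nat_add_iff 1).1 h'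
    have e2 := Summable.tsum_eq_zero_add hgm2'
    simp only [show (0:ℕ) - 2 = 0 from rfl, show (0:ℕ) + 1 - 2 = 0 from rfl,
      show ∀ n : ℕ, n + 1 + 1 - 2 = n from fun _ => rfl] at e1 e2
    rw [e1, e2, ← hGdef]
    linarith
  have hTsum : ∑' n, kk k₀ n ^ 2 * ‖goyB k₀ u v n‖ ^ 2 ≤ 7168 * M * G := by
    calc ∑' n, kk k₀ n ^ 2 * ‖goyB k₀ u v n‖ ^ 2 ≤ ∑' n, h n := Summable.tsum_le_tsum key hLs hhs
    _ = 1024 * M * ∑' n, (g (n-1) + g (n+1) + g (n+2) + g (n-2)) := tsum_mul_left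
    _ = 1024 * M * ((∑' n : ℕ, g (n-1)) + (∑' n : ℕ, g (n+1)) + (∑' n : ℕ, g (n+2))
        + (∑' n : ℕ, g (n-2))) := by
        rw [Summable.tsum_add ((hgm1.add hg1).add hg2) hgm2, Summable.tsum_add (hgm1.add hg1) hg2,
          Summable.tsum_add hgm1 hg1]
    _ ≤ 1024 * M * (2*G + G + G + 3*G) := by
        apply mul_le_mul_of_nonneg_left _ (by positivity)
        linarith [hTm1, hT1, hT2, hTm2]
    _ = 7168 * M * G := by ring
  -- final sqrt step
  have hsq : Real.sqrt (∑' n, kk k₀ n ^ 2 * ‖goyB k₀ u v n‖ ^ 2) ≤ Real.sqrt (7168 * M * G) :=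
    Real.sqrt_le_sqrt hTsum
  refine hsq.trans ?_
  rw [Real.sqrt_mul (by positivity) G, Real.sqrt_mul (by norm_num) M]
  have h85 : Real.sqrt 7168 ≤ 85 := by
    have : Real.sqrt 7168 ≤ Real.sqrt 7225 := Real.sqrt_le_sqrt (by norm_num)
    rwa [show (7225:ℝ) = 85^2 by norm_num, Real.sqrt_sq (by norm_num : (0:ℝ) ≤ 85)] at this
  have := mul_le_mul_of_nonneg_right h85
    (mul_nonneg (Real.sqrt_nonneg M) (Real.sqrt_nonneg G))
  calc Real.sqrt 7168 * Real.sqrt M * Real.sqrt G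
      = Real.sqrt 7168 * (Real.sqrt M * Real.sqrt G) := by ring
    _ ≤ 85 * (Real.sqrt M * Real.sqrt G) := by
        exact mul_le_mul_of_nonneg_right h85 (mul_nonneg (Real.sqrt_nonneg M) (Real.sqrt_nonneg G))
    _ = 85 * Real.sqrt M * Real.sqrt G := by ring
end

section
/- For every u ∈ V and v ∈ H, the series ∑ₙ Bₙ(u, v)·v̄ₙ converges absolutely and Re ∑ₙ Bₙ(u, v)·v̄ₙ = 0, i.e. (B(u, v), v) = 0 in the real inner product of H. -/
open Complex MeasureTheory Filter Topology

/-!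
Every term of `Bₙ(u,v) v̄ₙ` is `i kₘ ūₘ₊ₚ v̄ₘ₊_q v̄ₘ` for one of the two triads `(p,q) = (2,1)` and
`(1,2)`, times a constant (`kₙ/kₘ` is a power of two). Grouped this way, `Bₙ(u,v) v̄ₙ` is a sum of
two telescoping differences, so the series sums to the boundary values at `m = 0`, which carry the
factor `v̄₀ = 0`. Absolute convergence comes from `|kₘ ūₘ₊ₚ| ≤ ‖u‖` and
`|v̄ₘ₊_q v̄ₘ| ≤ (|vₘ₊_q|² + |vₘ|²)/2`.
-/

theorem summable_norm_mul_mul_of_norm_le {ι R : Type*} [SeminormedRing R] {a b c : ι → R}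
    {M : ℝ} (ha : ∀ i, ‖a i‖ ≤ M) (hb : Summable fun i => ‖b i‖ ^ 2)
    (hc : Summable fun i => ‖c i‖ ^ 2) : Summable fun i => ‖a i * b i * c i‖ := by
  refine ((hb.add hc).mul_left (M / 2)).of_nonneg_of_le (fun _ => norm_nonneg _) fun i => ?_
  have hbc : 2 * ‖b i‖ * ‖c i‖ ≤ ‖b i‖ ^ 2 + ‖c i‖ ^ 2 := two_mul_le_add_sq _ _
  calc ‖a i * b i * c i‖ ≤ ‖a i‖ * (‖b i‖ * ‖c i‖) := by rw [← mul_assoc]; exact norm_mul₃_le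
    _ ≤ M * ((‖b i‖ ^ 2 + ‖c i‖ ^ 2) / 2) :=
        mul_le_mul (ha i) (by linarith) (by positivity) ((norm_nonneg _).trans (ha i))
    _ = M / 2 * (‖b i‖ ^ 2 + ‖c i‖ ^ 2) := by ring

/-- With truncated subtraction the first `j` terms `f (n - j)` all equal `f 0`. -/
theorem HasSum.sub_comp_tsub {G : Type*} [AddCommGroup G] [TopologicalSpace G]
    [IsTopologicalAddGroup G] {f : ℕ → G} {s : G} (hf : HasSum f s) (j : ℕ) :
    HasSum (fun n => f (n - j) - f n) (j • f 0) := by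
  have hshift : HasSum (fun n => f (n - j)) (s + j • f 0) := by
    refine (hasSum_nat_add_iff' j).mp ?_
    have hhead : ∑ i ∈ Finset.range j, f (i - j) = j • f 0 := by
      rw [Finset.sum_congr rfl fun i hi => by rw [Nat.sub_eq_zero_of_le
        (Finset.mem_range.mp hi).le], Finset.sum_const, Finset.card_range]
    simpa only [Nat.add_sub_cancel, hhead, add_sub_cancel_right] using hf
  simpa only [add_sub_cancel_left] using hshift.sub hf

theorem kk_add (k₀ : ℝ) (n p : ℕ) : kk k₀ (n + p) = 2 ^ p * kk k₀ n := by
  simp only [kk, pow_add]; ring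

theorem abs_kk_le_abs_kk_add (k₀ : ℝ) (n p : ℕ) : |kk k₀ n| ≤ |kk k₀ (n + p)| := by
  rw [kk_add, abs_mul, abs_of_pos (by positivity : (0 : ℝ) < 2 ^ p)]
  exact le_mul_of_one_le_left (abs_nonneg _) (one_le_pow₀ one_le_two)

theorem abs_kk_mul_norm_le {k₀ : ℝ} {u : ℕ → ℂ} (hu : memV k₀ u) (n : ℕ) :
    |kk k₀ n| * ‖u n‖ ≤ √(vnormSq k₀ u) := by
  refine (Real.le_sqrt (by positivity) (tsum_nonneg fun _ => by positivity)).mpr ?_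
  rw [mul_pow, sq_abs]
  exact hu.le_tsum n fun _ _ => by positivity

noncomputable def triad (k₀ : ℝ) (u v : ℕ → ℂ) (p q n : ℕ) : ℂ :=
  I * kk k₀ n * (starRingEnd ℂ) (u (n + p)) * (starRingEnd ℂ) (v (n + q)) * (starRingEnd ℂ) (v n)

theorem summable_triad {k₀ : ℝ} {u v : ℕ → ℂ} (hu : memV k₀ u) (hv : memH v) (p q : ℕ) :
    Summable (triad k₀ u v p q) := by
  unfold memH at hv
  refine Summable.of_norm (summable_norm_mul_mul_of_norm_le (M := √(vnormSq k₀ u)) (fun n => ?_)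
    (b := fun n => (starRingEnd ℂ) (v (n + q))) ?_ ?_)
  · simp only [norm_mul, norm_I, norm_real, Real.norm_eq_abs, norm_conj, one_mul]
    exact (mul_le_mul_of_nonneg_right (abs_kk_le_abs_kk_add k₀ n p) (norm_nonneg _)).trans
      (abs_kk_mul_norm_le hu _)
  · simpa only [norm_conj] using (summable_nat_add_iff q).mpr hv
  · simpa only [norm_conj] using hv

theorem triad_zero {k₀ : ℝ} {u v : ℕ → ℂ} (hv0 : v 0 = 0) (p q : ℕ) : triad k₀ u v p q 0 = 0 := by
  simp [triad, hv0]

theorem goyB_mul_conj_eq {k₀ : ℝ} {u v : ℕ → ℂ} (hv0 : v 0 = 0) (n : ℕ) :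
    goyB k₀ u v n * (starRingEnd ℂ) (v n) =
      (triad k₀ u v 2 1 (n - 1) - triad k₀ u v 2 1 n) / 2 +
        (triad k₀ u v 1 2 (n - 2) - triad k₀ u v 1 2 n) / 2 := by
  rcases n with _ | _ | m
  · simp [goyB]
  · simp only [goyB, triad, one_ne_zero, ↓reduceIte, Nat.reduceSub, zero_add, hv0, map_zero]
    ring
  · simp only [goyB, triad, Nat.add_sub_cancel, add_eq_zero, one_ne_zero,
      and_false, ↓reduceIte, kk_add k₀ m 2, kk_add k₀ m 1]
    push_cast
    ring

theorem stmt_6_general (k₀ : ℝ) (u v : ℕ → ℂ)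
    (hv0 : v 0 = 0) (hu : memV k₀ u) (hv : memH v) :
    Summable (fun n => ‖goyB k₀ u v n * (starRingEnd ℂ) (v n)‖) ∧
    (∑' n, goyB k₀ u v n * (starRingEnd ℂ) (v n)).re = 0 := by
  have hsum : HasSum (fun n => goyB k₀ u v n * (starRingEnd ℂ) (v n)) 0 := by
    simp only [goyB_mul_conj_eq hv0]
    simpa only [triad_zero hv0, smul_zero, zero_div, add_zero] using
      (((summable_triad hu hv 2 1).hasSum.sub_comp_tsub 1).div_const 2).add
        (((summable_triad hu hv 1 2).hasSum.sub_comp_tsub 2).div_const 2)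
  exact ⟨summable_norm_iff.mpr hsum.summable, by rw [hsum.tsum_eq, zero_re]⟩

/-- For `u ∈ V`, `v ∈ H`, the series `∑ₙ Bₙ(u,v)·v̄ₙ` converges
absolutely and `Re ∑ₙ Bₙ(u,v)·v̄ₙ = 0`, i.e. `(B(u,v), v) = 0`. -/
theorem stmt_6 (k₀ : ℝ) (hk₀ : 0 < k₀) (u v : ℕ → ℂ) (hu0 : u 0 = 0)
    (hv0 : v 0 = 0) (hu : memV k₀ u) (hv : memH v) :
    Summable (fun n => ‖goyB k₀ u v n * (starRingEnd ℂ) (v n)‖) ∧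
    (∑' n, goyB k₀ u v n * (starRingEnd ℂ) (v n)).re = 0 :=
  stmt_6_general k₀ u v hv0 hu hv
end
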